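/- For a fixed u ∈ S^n, the metrics γ_u(K,L) = max_{v ∈ S_u} |h_u(K,v) − h_u(L,v)| and the spherical Hausdorff distance δ_s induce the same topology on the space K_u^p(S^n) of proper convex bodies contained in the open hemisphere centered at u. -/

import Mathlib

open scoped RealInnerProductSpace Pointwise
open Real

noncomputable section

/-- `Esp n` is the ambient Euclidean space `ℝ^{n+1}` containing the unit sphere `S^n`. -/
abbrev Esp (n : ℕ) : Type := EuclideanSpace ℝ (Fin (n + 1))

/-- The unit sphere `S^n ⊆ ℝ^{n+1}`. -/
def uSphere (n : ℕ) : Set (Esp n) := {x | ‖x‖ = 1}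

/-- `rad A = {λ • x : λ ≥ 0, x ∈ A}`. -/
def radSet {n : ℕ} (A : Set (Esp n)) : Set (Esp n) :=
  {y | ∃ l : ℝ, 0 ≤ l ∧ ∃ x ∈ A, y = l • x}

/-- A set `A ⊆ S^n` is spherically convex if `rad A` is convex. -/
def SphConvex {n : ℕ} (A : Set (Esp n)) : Prop := Convex ℝ (radSet A)

/-- The open hemisphere centered at `u`. -/
def openHemi {n : ℕ} (u : Esp n) : Set (Esp n) := {v | ‖v‖ = 1 ∧ 0 < ⟪u, v⟫}

/-- The equator `S_u = {v ∈ S^n : u ⬝ v = 0}`. -/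
def equator {n : ℕ} (u : Esp n) : Set (Esp n) := {v | ‖v‖ = 1 ∧ ⟪u, v⟫ = 0}

/-- Proper convex bodies contained in the open hemisphere centered at `u`:
the class `K_u^p(S^n)`. -/
def properBodies {n : ℕ} (u : Esp n) : Set (Set (Esp n)) :=
  {K | K.Nonempty ∧ IsClosed K ∧ K ⊆ openHemi u ∧ SphConvex K}

/-- All proper convex bodies `K^p(S^n)`. -/
def allProperBodies (n : ℕ) : Set (Set (Esp n)) :=
  {K | ∃ u : Esp n, ‖u‖ = 1 ∧ K ∈ properBodies u}

/-- The gnomonic projection `g_u(v) = v/(u⬝v) − u`. -/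
def gno {n : ℕ} (u v : Esp n) : Esp n := (⟪u, v⟫)⁻¹ • v - u

/-- The inverse gnomonic projection `x ↦ (x+u)/‖x+u‖`. -/
def gnoInv {n : ℕ} (u x : Esp n) : Esp n := ‖x + u‖⁻¹ • (x + u)

/-- The hyperplane `ℝ^n_u = u^⊥` of `ℝ^{n+1}`. -/
def hyper {n : ℕ} (u : Esp n) : Set (Esp n) := {x | ⟪u, x⟫ = 0}

/-- The class `K(ℝ^n_u)` of (nonempty) compact convex subsets of the hyperplane `u^⊥`. -/
def cptCvx {n : ℕ} (u : Esp n) : Set (Set (Esp n)) :=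
  {C | C.Nonempty ∧ IsCompact C ∧ Convex ℝ C ∧ C ⊆ hyper u}

/-- The spherical support function `h_u(K,v) = max {sgn(v⬝w) d(u, w|S_{u,v}) : w ∈ K}`,
where `d(u, w|S_{u,v}) = arccos ((u⬝w)/√((u⬝w)² + (v⬝w)²))`. -/
def sphSupp {n : ℕ} (u : Esp n) (K : Set (Esp n)) (v : Esp n) : ℝ :=
  sSup ((fun w => Real.sign ⟪v, w⟫ *
    Real.arccos (⟪u, w⟫ / Real.sqrt (⟪u, w⟫ ^ 2 + ⟪v, w⟫ ^ 2))) '' K)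

/-- The Euclidean support function `h(C,x) = sup {x ⬝ y : y ∈ C}`. -/
def esupp {n : ℕ} (C : Set (Esp n)) (x : Esp n) : ℝ :=
  sSup ((fun y => ⟪x, y⟫) '' C)

/-- Spherical (geodesic) distance on `S^n`. -/
def sphDist {n : ℕ} (x y : Esp n) : ℝ := Real.arccos ⟪x, y⟫

/-- The Hausdorff distance `δ_s` induced by the spherical distance. -/
def sphHaus {n : ℕ} (A B : Set (Esp n)) : ℝ :=
  sInf {r | 0 ≤ r ∧ (∀ a ∈ A, ∃ b ∈ B, sphDist a b ≤ r) ∧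
    (∀ b ∈ B, ∃ a ∈ A, sphDist a b ≤ r)}

/-- The metric `γ_u(K,L) = max_{v ∈ S_u} |h_u(K,v) − h_u(L,v)|`. -/
def gammaU {n : ℕ} (u : Esp n) (K L : Set (Esp n)) : ℝ :=
  sSup ((fun v => |sphSupp u K v - sphSupp u L v|) '' equator u)

/-- Spherical projection of `K` onto the great subsphere `V ∩ S^n`:
`K|S = (rad K | V) ∩ S^n`. -/
def sphProj {n : ℕ} (V : Submodule ℝ (Esp n)) (K : Set (Esp n)) : Set (Esp n) :=
  ((fun x => (V.orthogonalProjection x : Esp n)) '' radSet K) ∩ uSphere n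

/-- Orthogonal projection of a subset of `ℝ^{n+1}` onto a linear subspace `W`. -/
def eProj {n : ℕ} (W : Submodule ℝ (Esp n)) (C : Set (Esp n)) : Set (Esp n) :=
  (fun x => (W.orthogonalProjection x : Esp n)) '' C

/-- The spherical convex hull: the intersection of all spherically convex subsets of `S^n`
containing `A`. -/
def sphHull {n : ℕ} (A : Set (Esp n)) : Set (Esp n) :=
  ⋂₀ {B | A ⊆ B ∧ B ⊆ uSphere n ∧ SphConvex B}

/-- The set `C` of pairs of proper convex bodies contained in a common open hemisphere. -/
def pairsC (n : ℕ) : Set (Set (Esp n) × Set (Esp n)) :=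
  {p | ∃ u : Esp n, ‖u‖ = 1 ∧ p.1 ∈ properBodies u ∧ p.2 ∈ properBodies u}

/-- `u`-projection covariance of a binary operation on `K_u^p(S^n)`:
`(K|S) * (L|S) = (K*L)|S` for all great subspheres `S = V ∩ S^n` through `u`
with `0 ≤ k = dim S ≤ n − 1`. -/
def uProjCovariant {n : ℕ} (u : Esp n)
    (op : Set (Esp n) → Set (Esp n) → Set (Esp n)) : Prop :=
  ∀ V : Submodule ℝ (Esp n), u ∈ V → Module.finrank ℝ V ≤ n →
    ∀ K ∈ properBodies u, ∀ L ∈ properBodies u,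
      op (sphProj V K) (sphProj V L) = sphProj V (op K L)

/-- Projection covariance: `u`-projection covariance for every `u ∈ S^n`. -/
def projCovariantC {n : ℕ} (op : Set (Esp n) → Set (Esp n) → Set (Esp n)) : Prop :=
  ∀ u : Esp n, ‖u‖ = 1 → uProjCovariant u op

/-- Projection covariance for operations on compact convex subsets of `u^⊥`. -/
def eProjCovariant {n : ℕ} (u : Esp n)
    (op : Set (Esp n) → Set (Esp n) → Set (Esp n)) : Prop :=
  ∀ W : Submodule ℝ (Esp n), (W : Set (Esp n)) ⊆ hyper u →
    ∀ K ∈ cptCvx u, ∀ L ∈ cptCvx u,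
      op (eProj W K) (eProj W L) = eProj W (op K L)

/-!
The gnomonic projection `g_u(w) = w / (u ⬝ w) - u` identifies the open hemisphere with `u^⊥`,
maps proper bodies to compact convex sets, and turns the spherical support function into
`h_u(K, v) = sup_{w ∈ K} arctan (v ⬝ g_u(w))`.

On a cap `{w | c ≤ u ⬝ w}` the maps `w ↦ v ⬝ g_u(w)`, `v ∈ S_u`, are uniformly Lipschitz, and
bodies `δ_s`-close to `K` stay in a cap around `K`; so they are `γ_u`-close to `K`.
Conversely, if `g_u(w)` lies at distance `d` from `g_u(K)`, the unit normal `v` of the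
hyperplane separating them at the nearest point lies on the equator, and
`h_u(L, v) - h_u(K, v) ≥ arctan (t + d) - arctan t` with `t` or `t + d` bounded by the size of
`g_u(K)`. Hence `γ_u`-closeness forces the gnomonic images to be Hausdorff-close, and `g_u⁻¹`
is Lipschitz on `u^⊥`.
-/

lemma self_le_pi_mul_sin_half {θ : ℝ} (h0 : 0 ≤ θ) (hπ : θ ≤ π) : θ ≤ π * sin (θ / 2) := by
  have h := mul_le_sin (x := θ / 2) (by linarith) (by linarith)
  rw [show 2 / π * (θ / 2) = θ / π by ring, div_le_iff₀ pi_pos] at h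
  linarith

lemma abs_arctan_sub_arctan_le (x y : ℝ) : |arctan x - arctan y| ≤ |x - y| := by
  have hlip : LipschitzWith 1 arctan := lipschitzWith_of_nnnorm_deriv_le differentiable_arctan
    fun x => by
      rw [← NNReal.coe_le_coe, coe_nnnorm, Real.deriv_arctan, Real.norm_eq_abs,
        abs_of_pos (by positivity)]
      exact div_le_one_of_le₀ (by nlinarith) (by positivity)
  simpa [dist_eq_norm] using hlip.dist_le_mul x y

lemma sub_div_le_arctan_sub_arctan {x y B : ℝ} (hxy : y ≤ x) (hx : |x| ≤ B) (hy : |y| ≤ B) :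
    (x - y) / (1 + B ^ 2) ≤ arctan x - arctan y := by
  rw [div_eq_inv_mul, ← one_div]
  refine (convex_Icc (-B) B).mul_sub_le_image_sub_of_le_deriv continuous_arctan.continuousOn
    differentiable_arctan.differentiableOn (fun t ht => ?_) y (abs_le.mp hy) x (abs_le.mp hx) hxy
  rw [interior_Icc] at ht
  rw [Real.deriv_arctan]
  exact one_div_le_one_div_of_le (by positivity) (by nlinarith [ht.1, ht.2])

/-- `r` is less than the increase of `arctan` over any unit interval meeting `[-R, R]`, which
forces `x - y ≤ 1`; the mean value theorem on `[-R - 1, R + 1]` then applies. -/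
lemma sub_le_of_arctan_sub_arctan_le {x y R r : ℝ} (hxy : y ≤ x) (hR : |x| ≤ R ∨ |y| ≤ R)
    (hr : r < 1 / (1 + (R + 1) ^ 2)) (h : arctan x - arctan y ≤ r) :
    x - y ≤ (1 + (R + 1) ^ 2) * r := by
  wlog hy : |y| ≤ R generalizing x y
  · have hx := hR.resolve_right hy
    have := this (x := -y) (y := -x) (by linarith) (Or.inr (by rwa [abs_neg]))
      (by rw [arctan_neg, arctan_neg]; linarith) (by rwa [abs_neg])
    linarith
  have hB : 0 < 1 + (R + 1) ^ 2 := by positivity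
  rw [abs_le] at hy
  by_cases hd : x - y ≤ 1
  · have := sub_div_le_arctan_sub_arctan hxy (B := R + 1) (abs_le.mpr ⟨by linarith, by linarith⟩)
      (abs_le.mpr ⟨by linarith, by linarith⟩)
    rw [div_le_iff₀ hB] at this
    nlinarith
  · have h1 := sub_div_le_arctan_sub_arctan (x := y + 1) (y := y) (B := R + 1) (by linarith)
      (abs_le.mpr ⟨by linarith, by linarith⟩) (abs_le.mpr ⟨by linarith, by linarith⟩)
    have h2 : arctan (y + 1) ≤ arctan x := arctan_strictMono.monotone (by linarith)
    rw [add_sub_cancel_left] at h1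
    linarith

lemma sign_mul_arccos_eq_arctan {c s : ℝ} (hc : 0 < c) :
    sign s * arccos (c / √(c ^ 2 + s ^ 2)) = arctan (s / c) := by
  have key : ∀ t : ℝ, 0 ≤ t → arccos (c / √(c ^ 2 + t ^ 2)) = arctan (t / c) := by
    intro t ht
    rw [arctan_eq_arccos (by positivity)]
    congr 1
    rw [show 1 + (t / c) ^ 2 = (c ^ 2 + t ^ 2) / c ^ 2 by field_simp,
      sqrt_div (by positivity), sqrt_sq hc.le, inv_div]
  rcases lt_trichotomy s 0 with hs | rfl | hs
  · rw [sign_of_neg hs, show s / c = -(-s / c) by ring, arctan_neg, ← key (-s) (by linarith),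
      neg_sq]
    ring
  · simp
  · rw [sign_of_pos hs, key s hs.le, one_mul]

lemma abs_div_sub_div_le {sa sb ca cb κ : ℝ} (hκ : 0 < κ) (hca : κ ≤ ca) (hcb : κ ≤ cb)
    (hsb : |sb| ≤ 1) (hcb1 : cb ≤ 1) :
    |sa / ca - sb / cb| ≤ (|sa - sb| + |ca - cb|) / κ ^ 2 := by
  have hca0 : 0 < ca := hκ.trans_le hca
  have hcb0 : 0 < cb := hκ.trans_le hcb
  have hnum : |(sa - sb) * cb + sb * (cb - ca)| ≤ |sa - sb| + |ca - cb| :=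
    calc _ ≤ |sa - sb| * |cb| + |sb| * |cb - ca| := by
          rw [← abs_mul, ← abs_mul]; exact abs_add_le _ _
      _ ≤ |sa - sb| * 1 + 1 * |ca - cb| := by
          rw [abs_sub_comm cb ca, abs_of_pos hcb0]; gcongr
      _ = _ := by ring
  rw [show sa / ca - sb / cb = ((sa - sb) * cb + sb * (cb - ca)) / (ca * cb) by field_simp; ring,
    abs_div, abs_of_pos (mul_pos hca0 hcb0)]
  exact div_le_div₀ (by positivity) hnum (by positivity) (by nlinarith)

section InnerProductSpace

variable {F : Type*} [NormedAddCommGroup F] [InnerProductSpace ℝ F]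

lemma abs_inner_sub_inner_le_norm_sub {v : F} (hv : ‖v‖ = 1) (a b : F) :
    |⟪v, a⟫ - ⟪v, b⟫| ≤ ‖a - b‖ := by
  rw [← inner_sub_right]
  simpa [hv] using abs_real_inner_le_norm v (a - b)

lemma norm_inv_norm_smul_sub_le {x y : F} (hx : 1 ≤ ‖x‖) (hy : 1 ≤ ‖y‖) :
    ‖‖x‖⁻¹ • x - ‖y‖⁻¹ • y‖ ≤ 2 * ‖x - y‖ := by
  have hx0 : 0 < ‖x‖ := one_pos.trans_le hx
  have hy0 : 0 < ‖y‖ := one_pos.trans_le hy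
  have h1 : ‖‖x‖⁻¹ • (x - y)‖ ≤ ‖x - y‖ := by
    rw [norm_smul, norm_inv, norm_norm]
    exact mul_le_of_le_one_left (norm_nonneg _) (inv_le_one_of_one_le₀ hx)
  have h2 : ‖(‖x‖⁻¹ - ‖y‖⁻¹) • y‖ ≤ ‖x - y‖ := by
    rw [norm_smul, Real.norm_eq_abs, ← abs_of_pos hy0, ← abs_mul, abs_of_pos hy0,
      show (‖x‖⁻¹ - ‖y‖⁻¹) * ‖y‖ = (‖y‖ - ‖x‖) / ‖x‖ by field_simp, abs_div, abs_of_pos hx0,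
      abs_sub_comm]
    exact (div_le_self (abs_nonneg _) hx).trans (abs_norm_sub_norm_le x y)
  calc ‖‖x‖⁻¹ • x - ‖y‖⁻¹ • y‖ = ‖‖x‖⁻¹ • (x - y) + (‖x‖⁻¹ - ‖y‖⁻¹) • y‖ := by
        rw [smul_sub, sub_smul, sub_add_sub_cancel]
    _ ≤ 2 * ‖x - y‖ := by linarith [norm_add_le (‖x‖⁻¹ • (x - y)) ((‖x‖⁻¹ - ‖y‖⁻¹) • y)]

/-- At a nearest point `p` of `C` to `x`, the direction `x - p` separates `x` from `C`. -/
lemma exists_mem_forall_inner_le_inner {C : Set F} (hne : C.Nonempty) (hC : IsComplete C)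
    (hconv : Convex ℝ C) (x : F) : ∃ p ∈ C, ∀ y ∈ C, ⟪x - p, y⟫ ≤ ⟪x - p, p⟫ := by
  obtain ⟨p, hp, hmin⟩ := exists_norm_eq_iInf_of_complete_convex hne hC hconv x
  refine ⟨p, hp, fun y hy => ?_⟩
  have := (norm_eq_iInf_iff_real_inner_le_zero hconv hp).mp hmin y hy
  rw [inner_sub_right] at this
  linarith

end InnerProductSpace

section Sphere

variable {n : ℕ} {u : Esp n}

lemma sphDist_nonneg (a b : Esp n) : 0 ≤ sphDist a b := arccos_nonneg _

lemma sphDist_le_pi (a b : Esp n) : sphDist a b ≤ π := arccos_le_pi _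

lemma norm_sub_eq_two_mul_sin_half_sphDist {a b : Esp n} (ha : ‖a‖ = 1) (hb : ‖b‖ = 1) :
    ‖a - b‖ = 2 * sin (sphDist a b / 2) := by
  have hab : |⟪a, b⟫| ≤ 1 := by simpa [ha, hb] using abs_real_inner_le_norm a b
  have hcos : cos (sphDist a b) = ⟪a, b⟫ := cos_arccos (abs_le.mp hab).1 (abs_le.mp hab).2
  have hsin : 0 ≤ sin (sphDist a b / 2) := sin_nonneg_of_nonneg_of_le_pi
    (by linarith [sphDist_nonneg a b]) (by linarith [sphDist_le_pi a b, pi_pos])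
  refine (sq_eq_sq₀ (norm_nonneg _) (by positivity)).mp ?_
  rw [norm_sub_sq_real, ha, hb, mul_pow, sin_sq_eq_half_sub,
    show 2 * (sphDist a b / 2) = sphDist a b by ring, hcos]
  ring

lemma norm_sub_le_sphDist {a b : Esp n} (ha : ‖a‖ = 1) (hb : ‖b‖ = 1) :
    ‖a - b‖ ≤ sphDist a b := by
  rw [norm_sub_eq_two_mul_sin_half_sphDist ha hb]
  linarith [sin_le (x := sphDist a b / 2) (by linarith [sphDist_nonneg a b])]

lemma sphDist_le_pi_div_two_mul_norm_sub {a b : Esp n} (ha : ‖a‖ = 1) (hb : ‖b‖ = 1) :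
    sphDist a b ≤ π / 2 * ‖a - b‖ := by
  rw [norm_sub_eq_two_mul_sin_half_sphDist ha hb]
  linarith [self_le_pi_mul_sin_half (sphDist_nonneg a b) (sphDist_le_pi a b)]

lemma inner_gno_self (hu : ‖u‖ = 1) {w : Esp n} (hw : ⟪u, w⟫ ≠ 0) : ⟪u, gno u w⟫ = 0 := by
  rw [gno, inner_sub_right, real_inner_smul_right, inv_mul_cancel₀ hw, real_inner_self_eq_norm_sq,
    hu, one_pow, sub_self]

lemma inner_gno_of_inner_eq_zero {v : Esp n} (hv : ⟪u, v⟫ = 0) (w : Esp n) :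
    ⟪v, gno u w⟫ = ⟪v, w⟫ / ⟪u, w⟫ := by
  rw [gno, inner_sub_right, real_inner_smul_right, real_inner_comm u v, hv, sub_zero,
    div_eq_inv_mul]

lemma gnoInv_gno {w : Esp n} (hw : w ∈ openHemi u) : gnoInv u (gno u w) = w := by
  rw [gnoInv, gno, sub_add_cancel, norm_smul, hw.1, mul_one, norm_inv, Real.norm_eq_abs,
    abs_of_pos hw.2, inv_inv, smul_smul, mul_inv_cancel₀ hw.2.ne', one_smul]

lemma one_le_norm_gno_add (hu : ‖u‖ = 1) {w : Esp n} (hw : ⟪u, w⟫ ≠ 0) :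
    1 ≤ ‖gno u w + u‖ := by
  have h : ‖gno u w + u‖ ^ 2 = ‖gno u w‖ ^ 2 + 1 := by
    rw [norm_add_sq_real, real_inner_comm, inner_gno_self hu hw, hu]
    ring
  nlinarith [norm_nonneg (gno u w + u), sq_nonneg ‖gno u w‖]

/-- `g_u⁻¹` normalizes the vectors `x + u`, `x ∈ u^⊥`, which have norm at least `1`. -/
lemma sphDist_le_pi_mul_norm_gno_sub (hu : ‖u‖ = 1) {a b : Esp n} (ha : a ∈ openHemi u)
    (hb : b ∈ openHemi u) : sphDist a b ≤ π * ‖gno u a - gno u b‖ := by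
  have hchord : ‖a - b‖ ≤ 2 * ‖gno u a - gno u b‖ := by
    have h := norm_inv_norm_smul_sub_le (one_le_norm_gno_add hu ha.2.ne')
      (one_le_norm_gno_add hu hb.2.ne')
    rwa [← gnoInv, ← gnoInv, gnoInv_gno ha, gnoInv_gno hb, add_sub_add_right_eq_sub] at h
  calc sphDist a b ≤ π / 2 * ‖a - b‖ := sphDist_le_pi_div_two_mul_norm_sub ha.1 hb.1
    _ ≤ π / 2 * (2 * ‖gno u a - gno u b‖) := by gcongr
    _ = π * ‖gno u a - gno u b‖ := by ring

lemma image_gno_eq {K : Set (Esp n)} (hK : K ⊆ openHemi u) :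
    gno u '' K = (-u) +ᵥ (radSet K ∩ {y | ⟪u, y⟫ = 1}) := by
  ext x
  simp only [Set.mem_image, Set.mem_vadd_set, Set.mem_inter_iff, Set.mem_ofPred_eq, vadd_eq_add]
  constructor
  · rintro ⟨w, hw, rfl⟩
    refine ⟨(⟪u, w⟫)⁻¹ • w, ⟨⟨_, inv_nonneg.mpr (hK hw).2.le, w, hw, rfl⟩, ?_⟩, ?_⟩
    · rw [real_inner_smul_right, inv_mul_cancel₀ (hK hw).2.ne']
    · rw [gno, neg_add_eq_sub]
  · rintro ⟨_, ⟨⟨l, -, w, hw, rfl⟩, hl⟩, rfl⟩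
    rw [real_inner_smul_right] at hl
    refine ⟨w, hw, ?_⟩
    rw [gno, neg_add_eq_sub, eq_inv_of_mul_eq_one_left hl]

lemma convex_image_gno {K : Set (Esp n)} (hK : K ∈ properBodies u) : Convex ℝ (gno u '' K) := by
  rw [image_gno_eq hK.2.2.1]
  exact (hK.2.2.2.inter (convex_hyperplane (innerₛₗ ℝ u).isLinear 1)).vadd _

lemma isCompact_of_mem_properBodies {K : Set (Esp n)} (hK : K ∈ properBodies u) :
    IsCompact K :=
  (isCompact_sphere (0 : Esp n) 1).of_isClosed_subset hK.2.1
    fun _ hw => mem_sphere_zero_iff_norm.mpr (hK.2.2.1 hw).1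

lemma isCompact_image_gno {K : Set (Esp n)} (hK : K ∈ properBodies u) :
    IsCompact (gno u '' K) := by
  refine (isCompact_of_mem_properBodies hK).image_of_continuousOn ?_
  have hinv : ContinuousOn (fun w : Esp n => (⟪u, w⟫)⁻¹) K :=
    (continuous_const.inner continuous_id).continuousOn.inv₀ fun w hw => (hK.2.2.1 hw).2.ne'
  exact (hinv.smul continuousOn_id).sub continuousOn_const

/-- The signed angle `sgn(v ⬝ w) · d(u, w|S_{u,v})` is the angle whose tangent is
`(v ⬝ w) / (u ⬝ w) = v ⬝ g_u(w)`. -/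
lemma sphSupp_eq_sSup_arctan {K : Set (Esp n)} (hK : K ⊆ openHemi u) {v : Esp n}
    (hv : ⟪u, v⟫ = 0) : sphSupp u K v = sSup ((fun w => arctan ⟪v, gno u w⟫) '' K) := by
  refine congrArg sSup (Set.image_congr fun w hw => ?_)
  rw [inner_gno_of_inner_eq_zero hv]
  exact sign_mul_arccos_eq_arctan (hK hw).2

lemma bddAbove_image_arctan {α : Type*} (f : α → ℝ) (s : Set α) :
    BddAbove ((fun w => arctan (f w)) '' s) :=
  ⟨π / 2, by rintro _ ⟨w, -, rfl⟩; exact (arctan_lt_pi_div_two _).le⟩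

lemma arctan_inner_gno_le_sphSupp {K : Set (Esp n)} (hK : K ⊆ openHemi u) {v w : Esp n}
    (hv : ⟪u, v⟫ = 0) (hw : w ∈ K) : arctan ⟪v, gno u w⟫ ≤ sphSupp u K v := by
  rw [sphSupp_eq_sSup_arctan hK hv]
  exact le_csSup (bddAbove_image_arctan _ _) ⟨w, hw, rfl⟩

lemma sphSupp_le_of_forall_le {K : Set (Esp n)} (hK : K ⊆ openHemi u) (hKne : K.Nonempty)
    {v : Esp n} (hv : ⟪u, v⟫ = 0) {m : ℝ} (h : ∀ w ∈ K, arctan ⟪v, gno u w⟫ ≤ m) :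
    sphSupp u K v ≤ m := by
  rw [sphSupp_eq_sSup_arctan hK hv]
  exact csSup_le (hKne.image _) (by rintro _ ⟨w, hw, rfl⟩; exact h w hw)

lemma abs_sphSupp_le {K : Set (Esp n)} (hK : K ⊆ openHemi u) (hKne : K.Nonempty) {v : Esp n}
    (hv : ⟪u, v⟫ = 0) : |sphSupp u K v| ≤ π / 2 := by
  obtain ⟨w, hw⟩ := hKne
  refine abs_le.mpr ⟨?_, sphSupp_le_of_forall_le hK ⟨w, hw⟩ hv fun _ _ =>
    (arctan_lt_pi_div_two _).le⟩
  exact (neg_pi_div_two_lt_arctan _).le.trans (arctan_inner_gno_le_sphSupp hK hv hw)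

lemma abs_sphSupp_sub_le_gammaU {K L : Set (Esp n)} (hK : K ∈ properBodies u)
    (hL : L ∈ properBodies u) {v : Esp n} (hv : v ∈ equator u) :
    |sphSupp u K v - sphSupp u L v| ≤ gammaU u K L := by
  refine le_csSup ⟨π, ?_⟩ ⟨v, hv, rfl⟩
  rintro _ ⟨v, hv, rfl⟩
  linarith [abs_sub (sphSupp u K v) (sphSupp u L v), abs_sphSupp_le hK.2.2.1 hK.1 hv.2,
    abs_sphSupp_le hL.2.2.1 hL.1 hv.2]

lemma gammaU_le {K L : Set (Esp n)} {m : ℝ} (hm : 0 ≤ m)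
    (h : ∀ v ∈ equator u, |sphSupp u K v - sphSupp u L v| ≤ m) : gammaU u K L ≤ m :=
  Real.sSup_le (by rintro _ ⟨v, hv, rfl⟩; exact h v hv) hm

lemma sphHaus_le {K L : Set (Esp n)} {m : ℝ} (hm : 0 ≤ m)
    (hKL : ∀ a ∈ K, ∃ b ∈ L, sphDist a b ≤ m) (hLK : ∀ b ∈ L, ∃ a ∈ K, sphDist a b ≤ m) :
    sphHaus K L ≤ m :=
  csInf_le ⟨0, fun _ h => h.1⟩ ⟨hm, hKL, hLK⟩

lemma exists_norm_sub_lt_of_sphHaus_lt {K L : Set (Esp n)} (hK : K ∈ properBodies u)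
    (hL : L ∈ properBodies u) {r : ℝ} (h : sphHaus K L < r) :
    (∀ a ∈ K, ∃ b ∈ L, ‖a - b‖ < r) ∧ (∀ b ∈ L, ∃ a ∈ K, ‖b - a‖ < r) := by
  obtain ⟨a₀, ha₀⟩ := hK.1
  obtain ⟨b₀, hb₀⟩ := hL.1
  obtain ⟨m, ⟨-, hKL, hLK⟩, hm⟩ := exists_lt_of_csInf_lt (by
    exact ⟨π, pi_pos.le, fun _ _ => ⟨b₀, hb₀, sphDist_le_pi _ _⟩,
      fun _ _ => ⟨a₀, ha₀, sphDist_le_pi _ _⟩⟩) h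
  have chord {a b} (ha : a ∈ K) (hb : b ∈ L) (hab : sphDist a b ≤ m) : ‖a - b‖ < r :=
    ((norm_sub_le_sphDist (hK.2.2.1 ha).1 (hL.2.2.1 hb).1).trans hab).trans_lt hm
  refine ⟨fun a ha => ?_, fun b hb => ?_⟩
  · obtain ⟨b, hb, hab⟩ := hKL a ha
    exact ⟨b, hb, chord ha hb hab⟩
  · obtain ⟨a, ha, hab⟩ := hLK b hb
    exact ⟨a, ha, norm_sub_rev a b ▸ chord ha hb hab⟩

lemma exists_pos_le_inner_of_mem_properBodies {K : Set (Esp n)} (hK : K ∈ properBodies u) :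
    ∃ c > 0, ∀ w ∈ K, c ≤ ⟪u, w⟫ := by
  obtain ⟨w₀, hw₀, hmin⟩ := (isCompact_of_mem_properBodies hK).exists_isMinOn hK.1
    (by fun_prop : Continuous fun w : Esp n => ⟪u, w⟫).continuousOn
  exact ⟨⟪u, w₀⟫, (hK.2.2.1 hw₀).2, fun w hw => hmin hw⟩

lemma abs_arctan_inner_gno_sub_le (hu : ‖u‖ = 1) {κ : ℝ} (hκ : 0 < κ) {a b v : Esp n}
    (ha : κ ≤ ⟪u, a⟫) (hb : b ∈ openHemi u) (hbκ : κ ≤ ⟪u, b⟫) (hv : v ∈ equator u) :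
    |arctan ⟪v, gno u a⟫ - arctan ⟪v, gno u b⟫| ≤ 2 * ‖a - b‖ / κ ^ 2 := by
  rw [inner_gno_of_inner_eq_zero hv.2, inner_gno_of_inner_eq_zero hv.2]
  have hvb : |⟪v, b⟫| ≤ 1 := by simpa [hv.1, hb.1] using abs_real_inner_le_norm v b
  have hub : ⟪u, b⟫ ≤ 1 := by simpa [hu, hb.1] using real_inner_le_norm u b
  calc _ ≤ |⟪v, a⟫ / ⟪u, a⟫ - ⟪v, b⟫ / ⟪u, b⟫| := abs_arctan_sub_arctan_le _ _
    _ ≤ (|⟪v, a⟫ - ⟪v, b⟫| + |⟪u, a⟫ - ⟪u, b⟫|) / κ ^ 2 := abs_div_sub_div_le hκ ha hbκ hvb hub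
    _ ≤ (‖a - b‖ + ‖a - b‖) / κ ^ 2 := by
        gcongr
        exacts [abs_inner_sub_inner_le_norm_sub hv.1 a b, abs_inner_sub_inner_le_norm_sub hu a b]
    _ = 2 * ‖a - b‖ / κ ^ 2 := by ring

lemma sphSupp_le_sphSupp_add (hu : ‖u‖ = 1) {K L : Set (Esp n)} (hK : K ⊆ openHemi u)
    (hKne : K.Nonempty) (hL : L ⊆ openHemi u) {κ r : ℝ} (hκ : 0 < κ)
    (hKκ : ∀ a ∈ K, κ ≤ ⟪u, a⟫) (hLκ : ∀ b ∈ L, κ ≤ ⟪u, b⟫)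
    (hKL : ∀ a ∈ K, ∃ b ∈ L, ‖a - b‖ < r) {v : Esp n} (hv : v ∈ equator u) :
    sphSupp u K v ≤ sphSupp u L v + 2 * r / κ ^ 2 := by
  refine sphSupp_le_of_forall_le hK hKne hv.2 fun a ha => ?_
  obtain ⟨b, hb, hab⟩ := hKL a ha
  have hclose := (abs_le.mp (abs_arctan_inner_gno_sub_le hu hκ (hKκ a ha) (hL hb) (hLκ b hb) hv)).2
  have hr : 2 * ‖a - b‖ / κ ^ 2 ≤ 2 * r / κ ^ 2 := by gcongr
  linarith [arctan_inner_gno_le_sphSupp hL hv.2 hb]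

theorem exists_gammaU_lt_of_sphHaus_lt (hu : ‖u‖ = 1) {K : Set (Esp n)}
    (hK : K ∈ properBodies u) {ε : ℝ} (hε : 0 < ε) :
    ∃ r > 0, ∀ L ∈ properBodies u, sphHaus K L < r → gammaU u K L < ε := by
  obtain ⟨c, hc, hKc⟩ := exists_pos_le_inner_of_mem_properBodies hK
  set κ := c / 2 with hκc
  have hκ : 0 < κ := half_pos hc
  set r := min κ (ε * κ ^ 2 / 4)
  refine ⟨r, by positivity, fun L hL hKL => ?_⟩
  obtain ⟨hKL, hLK⟩ := exists_norm_sub_lt_of_sphHaus_lt hK hL hKL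
  have hKκ : ∀ a ∈ K, κ ≤ ⟪u, a⟫ := fun a ha => by linarith [hKc a ha]
  have hLκ : ∀ b ∈ L, κ ≤ ⟪u, b⟫ := by
    intro b hb
    obtain ⟨a, ha, hab⟩ := hLK b hb
    linarith [(abs_le.mp (abs_inner_sub_inner_le_norm_sub hu b a)).1, hKc a ha,
      min_le_left κ (ε * κ ^ 2 / 4)]
  have hbound : 2 * r / κ ^ 2 ≤ ε / 2 := by
    rw [div_le_iff₀ (by positivity)]
    linarith [min_le_right κ (ε * κ ^ 2 / 4)]
  refine ((gammaU_le (by positivity) fun v hv => abs_le.mpr ⟨?_, ?_⟩).trans hbound).trans_lt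
    (half_lt_self hε)
  · linarith [sphSupp_le_sphSupp_add hu hL.2.2.1 hL.1 hK.2.2.1 hκ hLκ hKκ hLK hv]
  · linarith [sphSupp_le_sphSupp_add hu hK.2.2.1 hK.1 hL.2.2.1 hκ hKκ hLκ hKL hv]

lemma exists_norm_gno_sub_le (hu : ‖u‖ = 1) {K : Set (Esp n)} (hK : K ∈ properBodies u)
    {w : Esp n} (hw : w ∈ openHemi u) {R r : ℝ} (hR : ‖gno u w‖ ≤ R ∨ ∀ a ∈ K, ‖gno u a‖ ≤ R)
    (hr0 : 0 ≤ r) (hr : r < 1 / (1 + (R + 1) ^ 2))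
    (h : ∀ v ∈ equator u, arctan ⟪v, gno u w⟫ ≤ sphSupp u K v + r) :
    ∃ a ∈ K, ‖gno u w - gno u a‖ ≤ (1 + (R + 1) ^ 2) * r := by
  obtain ⟨_, ⟨a, ha, rfl⟩, hsep⟩ := exists_mem_forall_inner_le_inner (hK.1.image _)
    (isCompact_image_gno hK).isComplete (convex_image_gno hK) (gno u w)
  refine ⟨a, ha, ?_⟩
  rcases eq_or_ne (gno u w) (gno u a) with hwa | hwa
  · rw [hwa, sub_self, norm_zero]
    positivity
  set d := ‖gno u w - gno u a‖
  set v := d⁻¹ • (gno u w - gno u a)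
  have hv : v ∈ equator u := by
    refine ⟨norm_smul_inv_norm (sub_ne_zero.mpr hwa), ?_⟩
    rw [real_inner_smul_right, inner_sub_right, inner_gno_self hu hw.2.ne',
      inner_gno_self hu (hK.2.2.1 ha).2.ne', sub_self, mul_zero]
  have hsepv : ∀ a' ∈ K, ⟪v, gno u a'⟫ ≤ ⟪v, gno u a⟫ := fun a' ha' => by
    simp only [v, real_inner_smul_left]
    exact mul_le_mul_of_nonneg_left (hsep _ ⟨a', ha', rfl⟩) (by positivity)
  have hgap : ⟪v, gno u w⟫ - ⟪v, gno u a⟫ = d := by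
    rw [← inner_sub_right, real_inner_smul_left, real_inner_self_eq_norm_sq,
      inv_mul_eq_div, pow_two, mul_self_div_self]
  have hsupp : sphSupp u K v ≤ arctan ⟪v, gno u a⟫ := sphSupp_le_of_forall_le hK.2.2.1 hK.1 hv.2
    fun a' ha' => arctan_strictMono.monotone (hsepv a' ha')
  have hRv : |⟪v, gno u w⟫| ≤ R ∨ |⟪v, gno u a⟫| ≤ R := by
    have hle (x : Esp n) : |⟪v, x⟫| ≤ ‖x‖ := by simpa [hv.1] using abs_real_inner_le_norm v x
    exact hR.imp (hle _).trans fun hKR => (hle _).trans (hKR a ha)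
  have := sub_le_of_arctan_sub_arctan_le (by linarith [norm_nonneg (gno u w - gno u a)]) hRv hr
    (by linarith [h v hv])
  rwa [hgap] at this

theorem exists_sphHaus_lt_of_gammaU_lt (hu : ‖u‖ = 1) {K : Set (Esp n)}
    (hK : K ∈ properBodies u) {ε : ℝ} (hε : 0 < ε) :
    ∃ r > 0, ∀ L ∈ properBodies u, gammaU u K L < r → sphHaus K L < ε := by
  obtain ⟨R, hR⟩ := isBounded_iff_forall_norm_le.mp (isCompact_image_gno hK).isBounded
  have hKR : ∀ a ∈ K, ‖gno u a‖ ≤ R := fun a ha => hR _ ⟨a, ha, rfl⟩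
  set A := 1 + (R + 1) ^ 2
  have hA : 0 < A := by positivity
  set r := min (1 / (2 * A)) (ε / (2 * π * A))
  have hr0 : 0 < r := by positivity
  refine ⟨r, hr0, fun L hL hγ => ?_⟩
  have hr : r < 1 / A := (min_le_left _ _).trans_lt
    (one_div_lt_one_div_of_lt hA (by linarith))
  have hpt : ∀ v ∈ equator u, |sphSupp u K v - sphSupp u L v| ≤ r := fun v hv =>
    (abs_sphSupp_sub_le_gammaU hK hL hv).trans hγ.le
  have hm : π * (A * r) ≤ ε / 2 := by
    have := min_le_right (1 / (2 * A)) (ε / (2 * π * A))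
    rw [le_div_iff₀ (by positivity)] at this
    linarith
  refine ((sphHaus_le (by positivity) (fun a ha => ?_) (fun b hb => ?_)).trans hm).trans_lt
    (half_lt_self hε)
  · obtain ⟨b, hb, hab⟩ := exists_norm_gno_sub_le hu hL (hK.2.2.1 ha) (Or.inl (hKR a ha))
      hr0.le hr fun v hv => by
        linarith [arctan_inner_gno_le_sphSupp hK.2.2.1 hv.2 ha, abs_le.mp (hpt v hv)]
    refine ⟨b, hb, (sphDist_le_pi_mul_norm_gno_sub hu (hK.2.2.1 ha) (hL.2.2.1 hb)).trans ?_⟩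
    gcongr
  · obtain ⟨a, ha, hab⟩ := exists_norm_gno_sub_le hu hK (hL.2.2.1 hb) (Or.inr hKR)
      hr0.le hr fun v hv => by
        linarith [arctan_inner_gno_le_sphSupp hL.2.2.1 hv.2 hb, abs_le.mp (hpt v hv)]
    refine ⟨a, ha, (sphDist_le_pi_mul_norm_gno_sub hu (hK.2.2.1 ha) (hL.2.2.1 hb)).trans ?_⟩
    rw [norm_sub_rev]
    gcongr

end Sphere

theorem stmt6_general {n : ℕ} (u : Esp n) (hu : ‖u‖ = 1) :
    ∀ K ∈ properBodies u, ∀ ε : ℝ, 0 < ε →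
      (∃ r > 0, ∀ L ∈ properBodies u, sphHaus K L < r → gammaU u K L < ε) ∧
      (∃ r > 0, ∀ L ∈ properBodies u, gammaU u K L < r → sphHaus K L < ε) :=
  fun _ hK _ hε =>
    ⟨exists_gammaU_lt_of_sphHaus_lt hu hK hε, exists_sphHaus_lt_of_gammaU_lt hu hK hε⟩

/-- The metrics `γ_u` and the spherical Hausdorff distance `δ_s` induce
the same topology on `K_u^p(S^n)`: around every proper convex body, metric balls of one
metric contain metric balls of the other. -/
theorem stmt6 {n : ℕ} (hn : 2 ≤ n) (u : Esp n) (hu : ‖u‖ = 1) :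
    ∀ K ∈ properBodies u, ∀ ε : ℝ, 0 < ε →
      (∃ r > 0, ∀ L ∈ properBodies u, sphHaus K L < r → gammaU u K L < ε) ∧
      (∃ r > 0, ∀ L ∈ properBodies u, gammaU u K L < r → sphHaus K L < ε) :=
  stmt6_general u hu
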